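/- arXiv:2601.18294 — 2 statements merged into one kernel-verified Lean document; each statement's English description precedes it below -/
import Mathlib

section
/- With ω(v,j) = 30·v·z(j)·z_f/(r·π), z strictly decreasing and positive, and 0 < ω_min < ω_max, define v_min = π·ω_min·r/(30·z(1)·z_f) and v_max = π·ω_max·r/(30·z(j_max)·z_f). Then for every v with v_min ≤ v ≤ v_max, the feasible gear set Φ(v) = { j : ω_min ≤ ω(v,j) ≤ ω_max } is nonempty, provided that for every j < j_max the velocity intervals Ω(j) = {v : j ∈ Φ(v)} and Ω(j+1) overlap, i.e., π·ω_max·r/(30·z(j)·z_f) ≥ π·ω_min·r/(30·z(j+1)·z_f). -/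
/-! Let `j` be the highest gear whose velocity interval `Ω(j)` starts at or below `v`. Either
`j = j_max`, where `v ≤ v_max` bounds `v` from above, or `v` lies below the start of `Ω(j + 1)`,
which by the overlap condition is at most the end of `Ω(j)`. -/

theorem exists_mem_Icc_of_consecutive_overlap {α : Type*} [LinearOrder α] (lo hi : ℕ → α)
    {n : ℕ} (hn : 1 ≤ n) (hoverlap : ∀ j, 1 ≤ j → j < n → lo (j + 1) ≤ hi j) {v : α}
    (hlo : lo 1 ≤ v) (hhi : v ≤ hi n) :
    ∃ j, 1 ≤ j ∧ j ≤ n ∧ v ∈ Set.Icc (lo j) (hi j) := by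
  induction n, hn using Nat.le_induction with
  | base => exact ⟨1, le_rfl, le_rfl, hlo, hhi⟩
  | succ n hn ih =>
    by_cases hv : v ≤ hi n
    · obtain ⟨j, hj1, hjn, hj⟩ := ih (fun j hj1 hjn ↦ hoverlap j hj1 (by omega)) hv
      exact ⟨j, hj1, by omega, hj⟩
    · exact ⟨n + 1, by omega, le_rfl,
        (hoverlap n hn (by omega)).trans (not_le.mp hv).le, hhi⟩

section GearVelocity

variable {z zf r ω v : ℝ}

theorem gear_velocity_le_iff (hz : 0 < z) (hzf : 0 < zf) (hr : 0 < r) :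
    Real.pi * ω * r / (30 * z * zf) ≤ v ↔ ω ≤ 30 * v * z * zf / (r * Real.pi) := by
  have := Real.pi_pos
  rw [div_le_iff₀ (by positivity), le_div_iff₀ (by positivity)]
  constructor <;> intro h <;> linarith

theorem le_gear_velocity_iff (hz : 0 < z) (hzf : 0 < zf) (hr : 0 < r) :
    v ≤ Real.pi * ω * r / (30 * z * zf) ↔ 30 * v * z * zf / (r * Real.pi) ≤ ω := by
  have := Real.pi_pos
  rw [le_div_iff₀ (by positivity), div_le_iff₀ (by positivity)]
  constructor <;> intro h <;> linarith

end GearVelocity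

theorem feasible_gear_set_nonempty_general
    (jmax : ℕ) (hjmax : 1 ≤ jmax) (z : ℕ → ℝ) (zf r ωmin ωmax : ℝ)
    (hz_pos : ∀ j, 1 ≤ j → j ≤ jmax → 0 < z j)
    (hzf : 0 < zf) (hr : 0 < r)
    (hoverlap : ∀ j, 1 ≤ j → j < jmax →
      Real.pi * ωmin * r / (30 * z (j + 1) * zf) ≤ Real.pi * ωmax * r / (30 * z j * zf))
    (v : ℝ)
    (hv₁ : Real.pi * ωmin * r / (30 * z 1 * zf) ≤ v)
    (hv₂ : v ≤ Real.pi * ωmax * r / (30 * z jmax * zf)) :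
    ∃ j, 1 ≤ j ∧ j ≤ jmax ∧
      ωmin ≤ 30 * v * z j * zf / (r * Real.pi) ∧
      30 * v * z j * zf / (r * Real.pi) ≤ ωmax := by
  obtain ⟨j, hj1, hj_le, hvlo, hvhi⟩ := exists_mem_Icc_of_consecutive_overlap
    (fun j ↦ Real.pi * ωmin * r / (30 * z j * zf)) (fun j ↦ Real.pi * ωmax * r / (30 * z j * zf))
    hjmax hoverlap hv₁ hv₂
  have hzj := hz_pos j hj1 hj_le
  exact ⟨j, hj1, hj_le, (gear_velocity_le_iff hzj hzf hr).mp hvlo,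
    (le_gear_velocity_iff hzj hzf hr).mp hvhi⟩

/-- If consecutive gears' feasible velocity intervals overlap, then for every
velocity `v ∈ [v_min, v_max]` the feasible gear set `Φ(v)` is nonempty. -/
theorem feasible_gear_set_nonempty
    (jmax : ℕ) (hjmax : 1 ≤ jmax) (z : ℕ → ℝ) (zf r ωmin ωmax : ℝ)
    (hz_pos : ∀ j, 1 ≤ j → j ≤ jmax → 0 < z j)
    (hz_anti : ∀ j₁ j₂, 1 ≤ j₁ → j₂ ≤ jmax → j₁ < j₂ → z j₂ < z j₁)
    (hzf : 0 < zf) (hr : 0 < r) (hωmin : 0 < ωmin) (hωlt : ωmin < ωmax)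
    (hoverlap : ∀ j, 1 ≤ j → j < jmax →
      Real.pi * ωmin * r / (30 * z (j + 1) * zf) ≤ Real.pi * ωmax * r / (30 * z j * zf))
    (v : ℝ)
    (hv₁ : Real.pi * ωmin * r / (30 * z 1 * zf) ≤ v)
    (hv₂ : v ≤ Real.pi * ωmax * r / (30 * z jmax * zf)) :
    ∃ j, 1 ≤ j ∧ j ≤ jmax ∧
      ωmin ≤ 30 * v * z j * zf / (r * Real.pi) ∧
      30 * v * z j * zf / (r * Real.pi) ≤ ωmax :=
  feasible_gear_set_nonempty_general jmax hjmax z zf r ωmin ωmax hz_pos hzf hr hoverlap v hv₁ hv₂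
end

section
/- Under the assumptions of Proposition 1 — for every gear j ∈ {1,...,j_max} and every v ∈ Ω(j) there exist T ∈ [T_min, T_max] and F ∈ [F_min, F_max] with T·z(j)·z_f/r − C·v² − F − G = 0 — for any initial state x with v_min ≤ x₂ ≤ v_max and the constant gear-shift schedule j_τ = φ(x₂) for τ = 0,...,N−1 (where φ(x₂) ∈ Φ(x₂)), the constant trajectory x(τ) = (x₁ + τ·Δt·x₂, x₂) with constant inputs (T, F) solving the equilibrium equation satisfies: (i) the dynamics constraint x(τ+1) = f(x(τ), (T, F, j_τ)); (ii) the acceleration constraint |x₂(τ+1) − x₂(τ)| ≤ a_max·Δt for any a_max ≥ 0; (iii) the engine speed constraints ω_min ≤ ω(x₂(τ), j_τ) ≤ ω_max and ω_min ≤ ω(x₂(τ+1), j_τ) ≤ ω_max; (iv) the torque rate constraint |T(τ+1) − T(τ)| ≤ ΔT_max·Δt for any ΔT_max ≥ 0; and (v) the no-skip constraint |j_{τ+1} − j_τ| ≤ 1. Hence the parameterized NLP with this gear schedule admits a feasible point. -/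
theorem constant_velocity_step_of_force_eq_zero {p v Δt m force : ℝ} (τ : ℝ) (hforce : force = 0) :
    ((p + (τ + 1) * Δt * v, v) : ℝ × ℝ) = (p + τ * Δt * v + Δt * v, v + Δt / m * force) := by
  subst hforce
  ext
  · simp only; ring
  · simp

theorem constant_gear_schedule_feasible_general
    (jmax N : ℕ) (m Δt zf r C G ωmin ωmax Tmin Tmax Fmin Fmax amax ΔTmax : ℝ)
    (z : ℕ → ℝ)
    (hΔt : 0 < Δt)
    (hamax : 0 ≤ amax) (hΔT : 0 ≤ ΔTmax)
    (ω : ℝ → ℕ → ℝ)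
    (p v : ℝ)
    -- jc = φ(v) ∈ Φ(v)
    (jc : ℕ)
    (hjc : 1 ≤ jc ∧ jc ≤ jmax ∧ ωmin ≤ ω v jc ∧ ω v jc ≤ ωmax)
    -- Proposition 1 assumption: equilibrium exists for all gears and feasible velocities
    (hprop : ∀ j, 1 ≤ j → j ≤ jmax → ∀ v', ωmin ≤ ω v' j → ω v' j ≤ ωmax →
      ∃ T F, Tmin ≤ T ∧ T ≤ Tmax ∧ Fmin ≤ F ∧ F ≤ Fmax ∧
        T * z j * zf / r - C * v' ^ 2 - F - G = 0) :
    ∃ T F, Tmin ≤ T ∧ T ≤ Tmax ∧ Fmin ≤ F ∧ F ≤ Fmax ∧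
      -- (i) dynamics constraint for the constant trajectory
      (∀ τ : ℕ, τ < N →
        ((p + ((τ : ℝ) + 1) * Δt * v, v) : ℝ × ℝ) =
          ((p + (τ : ℝ) * Δt * v) + Δt * v,
            v + (Δt / m) * (T * z jc * zf / r - C * v ^ 2 - F - G))) ∧
      -- (ii) acceleration constraint
      (∀ τ : ℕ, τ < N → |v - v| ≤ amax * Δt) ∧
      -- (iii) engine speed constraints at both ends of each step
      (∀ τ : ℕ, τ < N → (ωmin ≤ ω v jc ∧ ω v jc ≤ ωmax) ∧
        (ωmin ≤ ω v jc ∧ ω v jc ≤ ωmax)) ∧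
      -- (iv) torque rate constraint
      (∀ τ : ℕ, τ < N → |T - T| ≤ ΔTmax * Δt) ∧
      -- (v) no-skip constraint
      (∀ τ : ℕ, τ < N → |(jc : ℤ) - (jc : ℤ)| ≤ 1) := by
  obtain ⟨hjc_pos, hjc_le, hω_lo, hω_hi⟩ := hjc
  obtain ⟨T, F, hT_lo, hT_hi, hF_lo, hF_hi, hbalance⟩ := hprop jc hjc_pos hjc_le v hω_lo hω_hi
  refine ⟨T, F, hT_lo, hT_hi, hF_lo, hF_hi, ?_, ?_, ?_, ?_, ?_⟩
  · exact fun τ _ => constant_velocity_step_of_force_eq_zero τ hbalance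
  · intro _ _
    simpa using mul_nonneg hamax hΔt.le
  · exact fun _ _ => ⟨⟨hω_lo, hω_hi⟩, hω_lo, hω_hi⟩
  · intro _ _
    simpa using mul_nonneg hΔT hΔt.le
  · simp

/-- Proposition 1: Under the equilibrium-existence assumption, for any initial
state with `v_min ≤ v ≤ v_max` and the constant gear-shift schedule `j_τ = φ(v) ∈ Φ(v)`,
the constant trajectory `x(τ) = (p + τ·Δt·v, v)` with constant equilibrium inputs `(T, F)`
satisfies the dynamics, acceleration, engine speed, torque rate, and no-skip constraints;
hence the parameterized NLP with this gear schedule admits a feasible point. -/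
theorem constant_gear_schedule_feasible
    (jmax N : ℕ) (m Δt zf r C G ωmin ωmax Tmin Tmax Fmin Fmax amax ΔTmax : ℝ)
    (z : ℕ → ℝ)
    (hm : 0 < m) (hΔt : 0 < Δt) (hzf : 0 < zf) (hr : 0 < r)
    (hamax : 0 ≤ amax) (hΔT : 0 ≤ ΔTmax)
    (ω : ℝ → ℕ → ℝ)
    (hω : ∀ v j, ω v j = 30 * v * z j * zf / (r * Real.pi))
    (p v : ℝ)
    -- v_min ≤ v ≤ v_max
    (hv₁ : Real.pi * ωmin * r / (30 * z 1 * zf) ≤ v)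
    (hv₂ : v ≤ Real.pi * ωmax * r / (30 * z jmax * zf))
    -- jc = φ(v) ∈ Φ(v)
    (jc : ℕ)
    (hjc : 1 ≤ jc ∧ jc ≤ jmax ∧ ωmin ≤ ω v jc ∧ ω v jc ≤ ωmax)
    -- Proposition 1 assumption: equilibrium exists for all gears and feasible velocities
    (hprop : ∀ j, 1 ≤ j → j ≤ jmax → ∀ v', ωmin ≤ ω v' j → ω v' j ≤ ωmax →
      ∃ T F, Tmin ≤ T ∧ T ≤ Tmax ∧ Fmin ≤ F ∧ F ≤ Fmax ∧
        T * z j * zf / r - C * v' ^ 2 - F - G = 0) :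
    ∃ T F, Tmin ≤ T ∧ T ≤ Tmax ∧ Fmin ≤ F ∧ F ≤ Fmax ∧
      -- (i) dynamics constraint for the constant trajectory
      (∀ τ : ℕ, τ < N →
        ((p + ((τ : ℝ) + 1) * Δt * v, v) : ℝ × ℝ) =
          ((p + (τ : ℝ) * Δt * v) + Δt * v,
            v + (Δt / m) * (T * z jc * zf / r - C * v ^ 2 - F - G))) ∧
      -- (ii) acceleration constraint
      (∀ τ : ℕ, τ < N → |v - v| ≤ amax * Δt) ∧
      -- (iii) engine speed constraints at both ends of each step
      (∀ τ : ℕ, τ < N → (ωmin ≤ ω v jc ∧ ω v jc ≤ ωmax) ∧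
        (ωmin ≤ ω v jc ∧ ω v jc ≤ ωmax)) ∧
      -- (iv) torque rate constraint
      (∀ τ : ℕ, τ < N → |T - T| ≤ ΔTmax * Δt) ∧
      -- (v) no-skip constraint
      (∀ τ : ℕ, τ < N → |(jc : ℤ) - (jc : ℤ)| ≤ 1) :=
  constant_gear_schedule_feasible_general jmax N m Δt zf r C G ωmin ωmax Tmin Tmax Fmin Fmax amax
    ΔTmax z hΔt hamax hΔT ω p v jc hjc hprop
end
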